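/- (Euclidean Weingarten equation, explicit form) Let U ⊆ ℂ be open and a, μ : U → ℂ holomorphic with μ(w) ≠ 0 for all w ∈ U. Define the normal Gauss map ν : U → ℝ⁴ by ν = (1/(1+|a|²))·(0, a+conj(a), −i(a−conj(a)), −1+|a|²) (a real unit vector, with values in the sphere S²), and set ξ = a'/(conj(μ)(1+|a|²)²). Then ν_w = ξ·conj(μ·W(a,−a)) holds componentwise on U, where W(a,−a) = (0, 1−a², i(1+a²), 2a), and |ξ|² = |a'|²/(|μ|²(1+|a|²)⁴) = −K, where K = −(1/λ²)Δ ln λ is the Gauss curvature of the induced metric with λ² = 4|μ|²(1+|a|²)²; in particular K = −|a'|²/(|μ|²(1+|a|²)⁴) ≤ 0. -/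

import Mathlib

/-!
A real-differentiable `f : ℂ → ℂ` whose derivative is `v ↦ p v + q v̄` has `f_w = p` and
`f_w̄ = q`, and sums, products, quotients, conjugates and holomorphic compositions act on the
pair `(p, q)` by the usual rules; with this calculus `ν_w` is computed componentwise.
For the curvature, `ln λ = Re (½ log λ²)` with `λ² = 4|μ|²(1+|a|²)²` a positive real, so
`∂_w ln λ = μ'/(2μ) + a'ā/(1+|a|²)`. As `Δ = 4 ∂_w̄ ∂_w` and `μ'/μ` is holomorphic,
`Δ ln λ = 4|a'|²/(1+|a|²)²`, whence `K = -|a'|²/(|μ|²(1+|a|²)⁴) = -|ξ|² ≤ 0`.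
-/

open Complex ComplexConjugate

/-- The Weierstrass vector `W(a,b) = (a+b, 1+ab, i(1-ab), a-b) ∈ ℂ⁴`. -/
noncomputable def W (a b : ℂ) : Fin 4 → ℂ := ![a + b, 1 + a * b, I * (1 - a * b), a - b]

/-- The Wirtinger derivative `g_w = (1/2)(g_u − i g_v)` of a map `g : ℂ → E`. -/
noncomputable def wd {E : Type*} [NormedAddCommGroup E] [NormedSpace ℂ E]
    (g : ℂ → E) (w : ℂ) : E :=
  (2⁻¹ : ℂ) • (fderiv ℝ g w 1 - Complex.I • fderiv ℝ g w Complex.I)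

/-- The Euclidean Laplacian `Δf = f_uu + f_vv` of `f : ℂ → ℝ`, `w = u + iv`. -/
noncomputable def lap (f : ℂ → ℝ) (w : ℂ) : ℝ :=
  fderiv ℝ (fun z => fderiv ℝ f z 1) w 1 +
    fderiv ℝ (fun z => fderiv ℝ f z Complex.I) w Complex.I

/-- A map with real derivative `wirtingerCLM p q` at `z` has `f_w = p` and `f_w̄ = q` there. -/
noncomputable def wirtingerCLM (p q : ℂ) : ℂ →L[ℝ] ℂ :=
  p • (ContinuousLinearMap.id ℂ ℂ).restrictScalars ℝ + q • conjCLE.toContinuousLinearMap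

@[simp]
theorem wirtingerCLM_apply (p q v : ℂ) : wirtingerCLM p q v = p * v + q * conj v := by
  simp [wirtingerCLM, smul_eq_mul]

def HasWirtingerDerivAt (f : ℂ → ℂ) (p q z : ℂ) : Prop :=
  HasFDerivAt f (wirtingerCLM p q) z

theorem DifferentiableAt.hasWirtingerDerivAt {f : ℂ → ℂ} {z : ℂ}
    (hf : DifferentiableAt ℂ f z) : HasWirtingerDerivAt f (deriv f z) 0 z := by
  refine (hf.hasDerivAt.hasFDerivAt.restrictScalars ℝ).congr_fderiv ?_
  ext v
  simp [mul_comm]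

theorem hasWirtingerDerivAt_const (c z : ℂ) : HasWirtingerDerivAt (fun _ => c) 0 0 z := by
  have h0 : wirtingerCLM 0 0 = 0 := by ext v; simp
  rw [HasWirtingerDerivAt, h0]
  exact hasFDerivAt_const c z

theorem HasDerivAt.comp_hasWirtingerDerivAt {f g : ℂ → ℂ} {p q g' z : ℂ}
    (hg : HasDerivAt g g' (f z)) (hf : HasWirtingerDerivAt f p q z) :
    HasWirtingerDerivAt (fun y => g (f y)) (g' * p) (g' * q) z := by
  refine ((hg.hasFDerivAt.restrictScalars ℝ).comp z hf).congr_fderiv ?_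
  ext v
  simp [smul_eq_mul]
  ring

namespace HasWirtingerDerivAt

variable {f g : ℂ → ℂ} {p q r s z : ℂ}

theorem congr_deriv (h : HasWirtingerDerivAt f p q z) {p' q' : ℂ} (hp : p = p') (hq : q = q') :
    HasWirtingerDerivAt f p' q' z :=
  hp ▸ hq ▸ h

theorem wd_eq (h : HasWirtingerDerivAt f p q z) : wd f z = p := by
  rw [wd, h.fderiv]
  simp only [wirtingerCLM_apply, map_one, conj_I, smul_eq_mul]
  ring_nf
  rw [I_sq]
  ring

theorem fderiv_re_apply (h : HasWirtingerDerivAt f p q z) (v : ℂ) :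
    fderiv ℝ (fun y => (f y).re) z v = (p * v + q * conj v).re := by
  have hre : HasFDerivAt (fun y => (f y).re) (reCLM.comp (wirtingerCLM p q)) z :=
    reCLM.hasFDerivAt.comp z h
  rw [hre.fderiv]
  simp

theorem add (hf : HasWirtingerDerivAt f p q z) (hg : HasWirtingerDerivAt g r s z) :
    HasWirtingerDerivAt (fun y => f y + g y) (p + r) (q + s) z := by
  refine (HasFDerivAt.add hf hg).congr_fderiv ?_
  ext v
  simp
  ring

theorem sub (hf : HasWirtingerDerivAt f p q z) (hg : HasWirtingerDerivAt g r s z) :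
    HasWirtingerDerivAt (fun y => f y - g y) (p - r) (q - s) z := by
  refine (HasFDerivAt.sub hf hg).congr_fderiv ?_
  ext v
  simp
  ring

theorem mul (hf : HasWirtingerDerivAt f p q z) (hg : HasWirtingerDerivAt g r s z) :
    HasWirtingerDerivAt (fun y => f y * g y) (p * g z + f z * r) (q * g z + f z * s) z := by
  refine (HasFDerivAt.mul hf hg).congr_fderiv ?_
  ext v
  simp [smul_eq_mul]
  ring

theorem const_mul (c : ℂ) (hf : HasWirtingerDerivAt f p q z) :
    HasWirtingerDerivAt (fun y => c * f y) (c * p) (c * q) z :=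
  ((hasWirtingerDerivAt_const c z).mul hf).congr_deriv (by ring) (by ring)

theorem mul_const (hf : HasWirtingerDerivAt f p q z) (c : ℂ) :
    HasWirtingerDerivAt (fun y => f y * c) (p * c) (q * c) z :=
  (hf.mul (hasWirtingerDerivAt_const c z)).congr_deriv (by ring) (by ring)

theorem star (hf : HasWirtingerDerivAt f p q z) :
    HasWirtingerDerivAt (fun y => conj (f y)) (conj q) (conj p) z := by
  refine (conjCLE.toContinuousLinearMap.hasFDerivAt.comp z hf).congr_fderiv ?_
  ext v
  simp
  ring

theorem inv (hf : HasWirtingerDerivAt f p q z) (h0 : f z ≠ 0) :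
    HasWirtingerDerivAt (fun y => (f y)⁻¹) (-(p / f z ^ 2)) (-(q / f z ^ 2)) z :=
  ((hasDerivAt_inv h0).comp_hasWirtingerDerivAt hf).congr_deriv (by ring) (by ring)

theorem div (hf : HasWirtingerDerivAt f p q z) (hg : HasWirtingerDerivAt g r s z)
    (h0 : g z ≠ 0) :
    HasWirtingerDerivAt (fun y => f y / g y)
      ((p * g z - f z * r) / g z ^ 2) ((q * g z - f z * s) / g z ^ 2) z := by
  simp only [div_eq_mul_inv]
  exact (hf.mul (hg.inv h0)).congr_deriv (by field_simp; ring) (by field_simp; ring)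

theorem clog (hf : HasWirtingerDerivAt f p q z) (h : f z ∈ slitPlane) :
    HasWirtingerDerivAt (fun y => log (f y)) (p / f z) (q / f z) z :=
  ((hasDerivAt_log h).comp_hasWirtingerDerivAt hf).congr_deriv (by ring) (by ring)

theorem differentiableAt (h : HasWirtingerDerivAt f p q z) : DifferentiableAt ℝ f z :=
  HasFDerivAt.differentiableAt h

theorem div_const (hf : HasWirtingerDerivAt f p q z) (c : ℂ) :
    HasWirtingerDerivAt (fun y => f y / c) (p / c) (q / c) z := by
  simpa only [div_eq_inv_mul] using hf.const_mul c⁻¹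

theorem pow (hf : HasWirtingerDerivAt f p q z) (n : ℕ) :
    HasWirtingerDerivAt (fun y => f y ^ n) (n * f z ^ (n - 1) * p) (n * f z ^ (n - 1) * q) z :=
  (hasDerivAt_pow n (f z)).comp_hasWirtingerDerivAt hf

end HasWirtingerDerivAt

theorem DifferentiableAt.hasWirtingerDerivAt_conj {f : ℂ → ℂ} {z : ℂ}
    (hf : DifferentiableAt ℂ f z) :
    HasWirtingerDerivAt (fun y => conj (f y)) 0 (conj (deriv f z)) z :=
  hf.hasWirtingerDerivAt.star.congr_deriv (map_zero _) rfl

theorem DifferentiableAt.hasWirtingerDerivAt_sq_norm {f : ℂ → ℂ} {z : ℂ}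
    (hf : DifferentiableAt ℂ f z) :
    HasWirtingerDerivAt (fun y => (‖f y‖ : ℂ) ^ 2)
      (deriv f z * conj (f z)) (f z * conj (deriv f z)) z := by
  simp_rw [← mul_conj']
  exact (hf.hasWirtingerDerivAt.mul hf.hasWirtingerDerivAt_conj).congr_deriv (by ring) (by ring)

open Filter Topology

theorem wd_apply {ι : Type*} [Fintype ι] {f : ℂ → ι → ℂ} {w : ℂ}
    (hf : ∀ i, DifferentiableAt ℝ (fun z => f z i) w) (i : ι) :
    wd f w i = wd (fun z => f z i) w := by
  simp [wd, fderiv_pi hf]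

theorem fderiv_fderiv_re_apply {F P Q : ℂ → ℂ} {Pp Pq Qp Qq w : ℂ}
    (hF : ∀ᶠ z in 𝓝 w, HasWirtingerDerivAt F (P z) (Q z) z)
    (hP : HasWirtingerDerivAt P Pp Pq w) (hQ : HasWirtingerDerivAt Q Qp Qq w) (v : ℂ) :
    fderiv ℝ (fun z => fderiv ℝ (fun y => (F y).re) z v) w v =
      (Pp * v ^ 2 + (Pq + Qp) * v * conj v + Qq * conj v ^ 2).re := by
  have hev : (fun z => fderiv ℝ (fun y => (F y).re) z v) =ᶠ[𝓝 w]
      fun z => (P z * v + Q z * conj v).re :=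
    hF.mono fun z hz => hz.fderiv_re_apply v
  rw [hev.fderiv_eq, ((hP.mul_const v).add (hQ.mul_const (conj v))).fderiv_re_apply v]
  ring_nf

/-- `Δ = 2 (∂_w̄ ∂_w + ∂_w ∂_w̄)`, on real parts. -/
theorem lap_re_eq {F P Q : ℂ → ℂ} {Pp Pq Qp Qq w : ℂ}
    (hF : ∀ᶠ z in 𝓝 w, HasWirtingerDerivAt F (P z) (Q z) z)
    (hP : HasWirtingerDerivAt P Pp Pq w) (hQ : HasWirtingerDerivAt Q Qp Qq w) :
    lap (fun z => (F z).re) w = (2 * (Pq + Qp)).re := by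
  rw [lap, fderiv_fderiv_re_apply hF hP hQ, fderiv_fderiv_re_apply hF hP hQ, ← add_re]
  congr 1
  simp only [map_one, conj_I]
  ring_nf
  rw [I_sq]
  ring

noncomputable def gaussMap (a : ℂ → ℂ) (z : ℂ) : Fin 4 → ℂ :=
  ((1 : ℂ) / (1 + (‖a z‖ : ℂ) ^ 2)) •
    ![0, a z + conj (a z), -I * (a z - conj (a z)), -1 + (‖a z‖ : ℂ) ^ 2]

theorem one_add_sq_norm_ne_zero (x : ℂ) : (1 : ℂ) + (‖x‖ : ℂ) ^ 2 ≠ 0 := by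
  exact_mod_cast (by positivity : (1 + ‖x‖ ^ 2 : ℝ) ≠ 0)

theorem one_add_mul_conj_ne_zero (x : ℂ) : 1 + x * conj x ≠ 0 := by
  rw [mul_conj']
  exact one_add_sq_norm_ne_zero x

theorem wd_gaussMap {a : ℂ → ℂ} {w : ℂ} (ha : DifferentiableAt ℂ a w) :
    wd (gaussMap a) w =
      (deriv a w / (1 + (‖a w‖ : ℂ) ^ 2) ^ 2) • fun i => conj (W (a w) (-a w) i) := by
  have hA := ha.hasWirtingerDerivAt
  have hC := ha.hasWirtingerDerivAt_conj
  have hR := (hasWirtingerDerivAt_const 1 w).div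
    ((hasWirtingerDerivAt_const 1 w).add ha.hasWirtingerDerivAt_sq_norm)
    (one_add_sq_norm_ne_zero (a w))
  have hρ := one_add_mul_conj_ne_zero (a w)
  have hcomp : ∀ i, ∃ q, HasWirtingerDerivAt (fun z => gaussMap a z i)
      (deriv a w / (1 + (‖a w‖ : ℂ) ^ 2) ^ 2 * conj (W (a w) (-a w) i)) q w := by
    intro i
    fin_cases i <;>
      simp only [gaussMap, W, Pi.smul_apply, smul_eq_mul, Fin.reduceFinMk, Matrix.cons_val]
    · exact ⟨_, (hR.mul (hasWirtingerDerivAt_const 0 w)).congr_deriv (by simp) rfl⟩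
    · refine ⟨_, (hR.mul (hA.add hC)).congr_deriv ?_ rfl⟩
      simp only [← mul_conj', map_add, map_neg, map_one, map_mul]
      field_simp
      ring
    · refine ⟨_, (hR.mul ((hA.sub hC).const_mul (-I))).congr_deriv ?_ rfl⟩
      simp only [← mul_conj', map_sub, map_neg, map_one, map_mul, conj_I]
      field_simp
      ring
    · refine ⟨_, (hR.mul ((hasWirtingerDerivAt_const (-1) w).add
        ha.hasWirtingerDerivAt_sq_norm)).congr_deriv ?_ rfl⟩
      simp only [← mul_conj', map_sub, map_neg]
      field_simp
      ring
  funext i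
  rw [wd_apply (fun j => (hcomp j).choose_spec.differentiableAt), (hcomp i).choose_spec.wd_eq]
  rfl

theorem lap_log_conformalFactor {U : Set ℂ} (hU : IsOpen U) {a μ : ℂ → ℂ}
    (ha : DifferentiableOn ℂ a U) (hμ : DifferentiableOn ℂ μ U) (hμ0 : ∀ z ∈ U, μ z ≠ 0)
    {w : ℂ} (hw : w ∈ U) :
    lap (fun z => Real.log √(4 * ‖μ z‖ ^ 2 * (1 + ‖a z‖ ^ 2) ^ 2)) w =
      4 * (‖deriv a w‖ ^ 2 / (1 + ‖a w‖ ^ 2) ^ 2) := by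
  set P : ℂ → ℂ := fun z => deriv μ z / μ z / 2 + deriv a z * conj (a z) / (1 + ‖a z‖ ^ 2)
  have hlog : (fun z => Real.log √(4 * ‖μ z‖ ^ 2 * (1 + ‖a z‖ ^ 2) ^ 2)) =
      fun z => (log (4 * ‖μ z‖ ^ 2 * (1 + ‖a z‖ ^ 2) ^ 2) / 2).re := by
    funext z
    rw [Real.log_sqrt (by positivity), div_ofNat_re]
    norm_cast
    rw [log_ofReal_re]
  have hF : ∀ᶠ z in 𝓝 w, HasWirtingerDerivAt
      (fun z => log (4 * ‖μ z‖ ^ 2 * (1 + ‖a z‖ ^ 2) ^ 2) / 2) (P z) (conj (P z)) z := by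
    filter_upwards [hU.mem_nhds hw] with z hz
    have hμz : μ z ≠ 0 := hμ0 z hz
    have hμz' : conj (μ z) ≠ 0 := (map_ne_zero _).2 hμz
    have hρ := one_add_mul_conj_ne_zero (a z)
    have hG := ((hasWirtingerDerivAt_const 4 z).mul
      (hμ.differentiableAt (hU.mem_nhds hz)).hasWirtingerDerivAt_sq_norm).mul
      (((hasWirtingerDerivAt_const 1 z).add
        (ha.differentiableAt (hU.mem_nhds hz)).hasWirtingerDerivAt_sq_norm).pow 2)
    have hslit : 4 * (‖μ z‖ : ℂ) ^ 2 * (1 + (‖a z‖ : ℂ) ^ 2) ^ 2 ∈ slitPlane := by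
      exact_mod_cast ofReal_mem_slitPlane.2 (by positivity)
    refine ((hG.clog hslit).div_const 2).congr_deriv ?_ ?_
    · simp only [← mul_conj', P]
      field_simp
      ring
    · simp only [← mul_conj', P, map_add, map_div₀, map_mul, map_one, map_ofNat, conj_conj]
      field_simp
      ring
  obtain ⟨p, hP⟩ :
      ∃ p, HasWirtingerDerivAt P p ((‖deriv a w‖ ^ 2 / (1 + ‖a w‖ ^ 2) ^ 2 : ℝ) : ℂ) w := by
    have hw' : U ∈ 𝓝 w := hU.mem_nhds hw
    have hμ' : DifferentiableAt ℂ (fun z => deriv μ z / μ z / 2) w :=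
      (((hμ.deriv hU).differentiableAt hw').div (hμ.differentiableAt hw') (hμ0 w hw)).div_const 2
    have ha' := ((ha.deriv hU).differentiableAt hw').hasWirtingerDerivAt
    have ha := ha.differentiableAt hw'
    refine ⟨_, (hμ'.hasWirtingerDerivAt.add ((ha'.mul ha.hasWirtingerDerivAt_conj).div
      ((hasWirtingerDerivAt_const 1 w).add ha.hasWirtingerDerivAt_sq_norm)
      (one_add_sq_norm_ne_zero (a w)))).congr_deriv rfl ?_⟩
    have hρ := one_add_mul_conj_ne_zero (a w)
    push_cast
    simp only [← mul_conj']
    field_simp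
    ring
  rw [hlog, lap_re_eq hF hP hP.star, conj_ofReal]
  norm_cast
  ring

theorem stmt_5 (U : Set ℂ) (hU : IsOpen U) (a μ : ℂ → ℂ)
    (ha : ∀ w ∈ U, DifferentiableAt ℂ a w) (hμ : ∀ w ∈ U, DifferentiableAt ℂ μ w)
    (hμ0 : ∀ w ∈ U, μ w ≠ 0)
    (ν : ℂ → Fin 4 → ℂ)
    (hν : ∀ w, ν w = ((1 : ℂ) / (1 + (‖a w‖ : ℂ) ^ 2)) •
      ![0, a w + conj (a w), -I * (a w - conj (a w)), -1 + (‖a w‖ : ℂ) ^ 2])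
    (ξ : ℂ → ℂ)
    (hξ : ∀ w, ξ w = deriv a w / (conj (μ w) * (1 + (‖a w‖ : ℂ) ^ 2) ^ 2))
    (lam : ℂ → ℝ)
    (hlam : ∀ w, lam w =
      Real.sqrt (4 * ‖μ w‖ ^ 2 * (1 + ‖a w‖ ^ 2) ^ 2))
    (K : ℂ → ℝ)
    (hK : ∀ w, K w = -(1 / (lam w) ^ 2) * lap (fun z => Real.log (lam z)) w) :
    ∀ w ∈ U,
      wd ν w = ξ w • (fun i => conj ((μ w • W (a w) (-(a w))) i)) ∧
      ‖ξ w‖ ^ 2 =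
        ‖deriv a w‖ ^ 2 /
          (‖μ w‖ ^ 2 * (1 + ‖a w‖ ^ 2) ^ 4) ∧
      ‖ξ w‖ ^ 2 = -K w ∧
      K w = -(‖deriv a w‖ ^ 2 /
          (‖μ w‖ ^ 2 * (1 + ‖a w‖ ^ 2) ^ 4)) ∧
      K w ≤ 0 := by
  intro w hw
  have hξw : ‖ξ w‖ ^ 2 = ‖deriv a w‖ ^ 2 / (‖μ w‖ ^ 2 * (1 + ‖a w‖ ^ 2) ^ 4) := by
    rw [hξ w, norm_div, norm_mul, norm_pow, norm_conj, ← ofReal_pow, ← ofReal_one,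
      ← ofReal_add, norm_real, Real.norm_of_nonneg (by positivity), div_pow, mul_pow, ← pow_mul]
  have hKw : K w = -(‖deriv a w‖ ^ 2 / (‖μ w‖ ^ 2 * (1 + ‖a w‖ ^ 2) ^ 4)) := by
    have hlap := lap_log_conformalFactor hU (fun z hz => (ha z hz).differentiableWithinAt)
      (fun z hz => (hμ z hz).differentiableWithinAt) hμ0 hw
    rw [hK w, funext hlam, hlap, Real.sq_sqrt (by positivity)]
    field_simp
  refine ⟨?_, hξw, by rw [hKw, neg_neg, hξw], hKw, by rw [hKw]; exact neg_nonpos.2 (by positivity)⟩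
  rw [show ν = gaussMap a from funext hν, wd_gaussMap (ha w hw)]
  ext i
  simp only [Pi.smul_apply, smul_eq_mul, hξ w, map_mul]
  field_simp [(map_ne_zero _).2 (hμ0 w hw)]
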